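/- arXiv:1903.01083 — 2 statements merged into one kernel-verified Lean document; each statement's English description precedes it below -/
import Mathlib

section
/- Suppose for a time step t: (i) m_j ≥ M_j/2 for all j; (ii) M_j ≥ (32/δ_j²)·log t for all j ≠ j*, and M_{j*} ≥ (32/δ²_{2nd})·log t, where δ_j is the empirical gap of arm j and δ_{2nd} the empirical gap of the second-best arm; and (iii) |θ̂_j − θ_j| < sqrt(2·log(t)/m_j) for all j. Then for every j ≠ j*, θ_{j*} ≥ θ̂_{j*} − δ_{2nd}/2 ≥ θ̂_j + δ_j/2 ≥ θ_j, so j* (the empirical best arm) equals the true best arm. -/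
lemma sqrt_aux (m d L : ℝ) (hm : 0 < m) (hd : 0 < d) (hL : 0 < L)
    (h : 16 / d ^ 2 * L ≤ m) : Real.sqrt (2 * L / m) ≤ d / 2 := by
  have hd2 : (0:ℝ) < d ^ 2 := by positivity
  have h1 : 2 * L / m ≤ d ^ 2 / 4 := by
    rw [div_le_div_iff₀ hm (by norm_num)]
    have h' : 16 * L / d ^ 2 ≤ m := by
      calc 16 * L / d ^ 2 = 16 / d ^ 2 * L := by ring
        _ ≤ m := h
    rw [div_le_iff₀ hd2] at h'
    nlinarith
  calc Real.sqrt (2 * L / m) ≤ Real.sqrt (d ^ 2 / 4) := Real.sqrt_le_sqrt h1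
    _ = d / 2 := by
        rw [show d ^ 2 / 4 = (d / 2) ^ 2 by ring, Real.sqrt_sq (by linarith)]

/-- Exploitation-correctness: under (i) `m_j ≥ M_j/2`, (ii) the expected-observation
lower bounds in terms of the empirical gaps, and (iii) the concentration of the
empirical means, the empirical best arm `j⋆` is the true best arm, via the chain
`θ_{j⋆} ≥ θ̂_{j⋆} − δ₂/2 ≥ θ̂_j + δ_j/2 ≥ θ_j`. -/
theorem stmt_11 (K : ℕ) (θ θhat : Fin K → ℝ) (jstar : Fin K)
    (m M : Fin K → ℝ) (t : ℝ) (ht : 1 < t)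
    (δ : Fin K → ℝ) (hδdef : ∀ j, δ j = θhat jstar - θhat j)
    (hjstar : ∀ j, θhat j ≤ θhat jstar)
    (hδpos : ∀ j, j ≠ jstar → 0 < δ j)
    (δ₂ : ℝ) (hδ₂min : ∀ j, j ≠ jstar → δ₂ ≤ δ j)
    (hδ₂mem : ∃ j, j ≠ jstar ∧ δ₂ = δ j)
    (hm : ∀ j, 0 < m j) (hM : ∀ j, 0 < M j)
    (h1 : ∀ j, M j / 2 ≤ m j)
    (h2 : ∀ j, j ≠ jstar → 32 / (δ j) ^ 2 * Real.log t ≤ M j)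
    (h2' : 32 / δ₂ ^ 2 * Real.log t ≤ M jstar)
    (h3 : ∀ j, |θhat j - θ j| < Real.sqrt (2 * Real.log t / m j)) :
    (∀ j, j ≠ jstar →
      θ jstar ≥ θhat jstar - δ₂ / 2 ∧
      θhat jstar - δ₂ / 2 ≥ θhat j + δ j / 2 ∧
      θhat j + δ j / 2 ≥ θ j) ∧
    (∀ j, θ j ≤ θ jstar) := by
  have hL : 0 < Real.log t := Real.log_pos ht
  obtain ⟨j₂, hj₂, hδ₂eq⟩ := hδ₂mem
  have hδ₂pos : 0 < δ₂ := hδ₂eq ▸ hδpos j₂ hj₂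
  -- bound for jstar
  have hstar : Real.sqrt (2 * Real.log t / m jstar) ≤ δ₂ / 2 := by
    apply sqrt_aux _ _ _ (hm jstar) hδ₂pos hL
    have e : 16 / δ₂ ^ 2 * Real.log t = (32 / δ₂ ^ 2 * Real.log t) / 2 := by ring
    have := h1 jstar
    linarith
  have hθstar : θ jstar ≥ θhat jstar - δ₂ / 2 := by
    have h := (abs_lt.mp (h3 jstar)).2
    linarith
  have key : ∀ j, j ≠ jstar →
      θ jstar ≥ θhat jstar - δ₂ / 2 ∧
      θhat jstar - δ₂ / 2 ≥ θhat j + δ j / 2 ∧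
      θhat j + δ j / 2 ≥ θ j := by
    intro j hj
    have hδj := hδpos j hj
    have hbj : Real.sqrt (2 * Real.log t / m j) ≤ δ j / 2 := by
      apply sqrt_aux _ _ _ (hm j) hδj hL
      have e : 16 / δ j ^ 2 * Real.log t = (32 / δ j ^ 2 * Real.log t) / 2 := by ring
      have := h1 j
      have := h2 j hj
      linarith
    refine ⟨hθstar, ?_, ?_⟩
    · have := hδ₂min j hj
      have := hδdef j
      linarith
    · have h := (abs_lt.mp (h3 j)).1
      linarith
  refine ⟨key, fun j => ?_⟩
  by_cases hj : j = jstar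
  · exact hj ▸ le_refl _
  · obtain ⟨a, b, c⟩ := key j hj
    linarith
end

section
/- For two product Bernoulli-observation processes over T rounds, where under measure P the reward of arm j is observed at round t with probability ∑_{i∈V^in(j)} 1{i_t = i}·p_{ij} and has distribution μ_j, and under P^(n) everything is identical except arm j's reward distribution is μ_j^(n), the KL divergence of the full observation sequences decomposes as KL(P, P^(n)) = ∑_{i∈V^in(j)} p_{ij}·E[N_i(T)]·KL(μ_j, μ_j^(n)), where N_i(T) is the expected number of pulls of arm i under P. -/
open MeasureTheory ProbabilityTheory
open scoped ENNReal NNReal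

section Stmt19Aux

universe u

variable {α β : Type*} [MeasurableSpace α] [MeasurableSpace β]

lemma stmt19_measurableEmbedding_inl : MeasurableEmbedding (@Sum.inl α β) :=
  ⟨Sum.inl_injective, measurable_inl, fun _ hs => MeasurableSet.inl_image hs⟩

lemma stmt19_map_withDensity {f : α → β} (hf : MeasurableEmbedding f) (μ : Measure α)
    {g : β → ℝ≥0∞} (hg : Measurable g) :
    (μ.map f).withDensity g = (μ.withDensity (fun x => g (f x))).map f := by
  ext s hs
  rw [withDensity_apply _ hs, setLIntegral_map hs hg hf.measurable, hf.map_apply,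
    withDensity_apply _ (hf.measurable hs)]

lemma stmt19_dirac_withDensity (a : α) {g : α → ℝ≥0∞} (hg : Measurable g) (hga : g a = 1) :
    (Measure.dirac a).withDensity g = Measure.dirac a := by
  ext s hs
  rw [withDensity_apply _ hs, ← lintegral_indicator hs, lintegral_dirac' _ (hg.indicator hs),
    Measure.dirac_apply' _ hs]
  by_cases h : a ∈ s <;> simp [h, hga]

lemma stmt19_lintegral_pi : ∀ (n : ℕ) (E : Fin n → Type u) (_ : ∀ i, MeasurableSpace (E i))
    (m : ∀ i, Measure (E i)) (_ : ∀ i, SigmaFinite (m i))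
    (f : ∀ i, E i → ℝ≥0∞) (_ : ∀ i, Measurable (f i)),
    ∫⁻ x, ∏ i, f i (x i) ∂Measure.pi m = ∏ i, ∫⁻ y, f i y ∂m i := by
  intro n
  induction n with
  | zero =>
    intro E _ m _ f _
    simp [Measure.pi_of_empty]
  | succ n ih =>
    intro E _ m hsf f hf
    calc ∫⁻ x, ∏ i, f i (x i) ∂Measure.pi m
        = ∫⁻ z : E 0 × ((i : Fin n) → E ((0 : Fin (n+1)).succAbove i)),
            ∏ i, f i ((MeasurableEquiv.piFinSuccAbove E 0).symm z i)
            ∂((m 0).prod (Measure.pi fun i => m ((0 : Fin (n+1)).succAbove i))) := by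
          rw [((measurePreserving_piFinSuccAbove m 0).symm).lintegral_map_equiv
            (fun x => ∏ i, f i (x i)) (MeasurableEquiv.piFinSuccAbove E 0).symm]
      _ = ∫⁻ z : E 0 × ((i : Fin n) → E ((0 : Fin (n+1)).succAbove i)),
            f 0 z.1 * ∏ i : Fin n, f ((0 : Fin (n+1)).succAbove i) (z.2 i)
            ∂((m 0).prod (Measure.pi fun i => m ((0 : Fin (n+1)).succAbove i))) := by
          refine lintegral_congr fun z => ?_
          rw [Fin.prod_univ_succAbove
            (fun i => f i ((MeasurableEquiv.piFinSuccAbove E 0).symm z i)) 0]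
          simp_rw [MeasurableEquiv.piFinSuccAbove_symm_apply, Fin.insertNthEquiv, Equiv.coe_fn_mk]
          simp [MeasurableEquiv.piFinSuccAbove, Fin.insertNthEquiv, Fin.insertNth_zero,
            Fin.cons_succ, Fin.zero_succAbove, cast_eq, Fin.insertNth_apply_succAbove]
          rfl
      _ = (∫⁻ y, f 0 y ∂m 0) *
            ∏ i : Fin n, ∫⁻ y, f ((0 : Fin (n+1)).succAbove i) y
              ∂m ((0 : Fin (n+1)).succAbove i) := by
          have hg2 : Measurable fun y : (i : Fin n) → E ((0 : Fin (n+1)).succAbove i) =>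
              ∏ i : Fin n, f ((0 : Fin (n+1)).succAbove i) (y i) :=
            Finset.measurable_prod _ fun i _ => (hf _).comp (measurable_pi_apply i)
          rw [lintegral_prod_mul (hf 0).aemeasurable hg2.aemeasurable,
            ih _ _ (fun i => m ((0 : Fin (n+1)).succAbove i))
              (fun i => hsf _) (fun i => f ((0 : Fin (n+1)).succAbove i)) (fun i => hf _)]
      _ = ∏ i, ∫⁻ y, f i y ∂m i :=
          (Fin.prod_univ_succAbove (fun i => ∫⁻ y, f i y ∂m i) 0).symm

lemma stmt19_pi_withDensity {n : ℕ} {α : Type u} [MeasurableSpace α]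
    (m ν : Fin n → Measure α) [∀ i, SigmaFinite (m i)] [∀ i, SigmaFinite (ν i)]
    {g : α → ℝ≥0∞} (hg : Measurable g) (h : ∀ i, (m i).withDensity g = ν i) :
    Measure.pi ν = (Measure.pi m).withDensity (fun x => ∏ i, g (x i)) := by
  refine Measure.pi_eq fun s hs => ?_
  rw [withDensity_apply _ (MeasurableSet.univ_pi hs),
    ← lintegral_indicator (MeasurableSet.univ_pi hs)]
  have hind : ∀ x : Fin n → α,
      (Set.univ.pi s).indicator (fun x => ∏ i, g (x i)) x
        = ∏ i, (s i).indicator g (x i) := by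
    intro x
    by_cases hx : x ∈ Set.univ.pi s
    · rw [Set.indicator_of_mem hx]
      exact Finset.prod_congr rfl fun i _ =>
        (Set.indicator_of_mem (hx i (Set.mem_univ i)) g).symm
    · rw [Set.indicator_of_notMem hx]
      obtain ⟨i, hi⟩ : ∃ i, x i ∉ s i := by
        by_contra hcon
        push_neg at hcon
        exact hx fun i _ => hcon i
      exact (Finset.prod_eq_zero (Finset.mem_univ i) (Set.indicator_of_notMem hi g)).symm
  simp_rw [hind]
  rw [stmt19_lintegral_pi n (fun _ => α) _ m (fun i => inferInstance)
    (fun i => (s i).indicator g) (fun i => hg.indicator (hs i))]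
  refine Finset.prod_congr rfl fun i _ => ?_
  rw [lintegral_indicator (hs i), ← withDensity_apply _ (hs i), h i]

end Stmt19Aux

/-- Divergence decomposition for one-step probabilistic graph feedback: with action
sequence `a`, per-round observation of arm `j` triggered with probability
`p_{a_t, j}` (for `a_t ∈ V^in(j)`), and the two processes differing only in the
reward distribution of arm `j` (`μj` vs `μjn`), the KL divergence of the observation
sequences equals `∑_{i ∈ V^in(j)} p_{ij} · N_i(T) · KL(μj, μjn)`. -/
theorem stmt_19 (K T : ℕ) (E : Fin K → Fin K → Prop) [DecidableRel E]
    (p : Fin K → Fin K → ℝ) (hp : ∀ i j, E i j → 0 < p i j ∧ p i j ≤ 1)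
    (j : Fin K) (a : Fin T → Fin K)
    (μj μjn : Measure ℝ) [IsProbabilityMeasure μj] [IsProbabilityMeasure μjn]
    (hac : μj ≪ μjn) (hint : Integrable (llr μj μjn) μj)
    (ν νn : Fin T → Measure (ℝ ⊕ Unit))
    [∀ t, IsProbabilityMeasure (ν t)] [∀ t, IsProbabilityMeasure (νn t)]
    (hν : ∀ t, ν t =
      ENNReal.ofReal (if E (a t) j then p (a t) j else 0) • μj.map Sum.inl +
      (1 - ENNReal.ofReal (if E (a t) j then p (a t) j else 0)) •
        Measure.dirac (Sum.inr () : ℝ ⊕ Unit))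
    (hνn : ∀ t, νn t =
      ENNReal.ofReal (if E (a t) j then p (a t) j else 0) • μjn.map Sum.inl +
      (1 - ENNReal.ofReal (if E (a t) j then p (a t) j else 0)) •
        Measure.dirac (Sum.inr () : ℝ ⊕ Unit)) :
    ∫ h, llr (Measure.pi ν) (Measure.pi νn) h ∂(Measure.pi ν) =
      ∑ i ∈ Finset.univ.filter (fun i => E i j),
        p i j * ((Finset.univ.filter fun t => a t = i).card : ℝ) *
          ∫ x, llr μj μjn x ∂μj := by
  classical
  set c : ℝ := ∫ x, llr μj μjn x ∂μj with hc
  set r : Fin T → ℝ := fun t => if E (a t) j then p (a t) j else 0 with hr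
  have hr0 : ∀ t, 0 ≤ r t := by
    intro t
    by_cases h : E (a t) j
    · simp [hr, h, (hp _ _ h).1.le]
    · simp [hr, h]
  set g : ℝ ⊕ Unit → ℝ≥0∞ := Sum.elim (μj.rnDeriv μjn) (fun _ => 1) with hgdef
  have hg : Measurable g := (Measure.measurable_rnDeriv μj μjn).sumElim measurable_const
  -- the same density works for every round
  have key : ∀ t, (νn t).withDensity g = ν t := by
    intro t
    rw [hνn t, hν t, withDensity_add_measure, withDensity_smul_measure,
      withDensity_smul_measure,
      stmt19_map_withDensity stmt19_measurableEmbedding_inl μjn hg,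
      stmt19_dirac_withDensity (Sum.inr () : ℝ ⊕ Unit) hg rfl]
    congr 2
    have h1 : (fun x => g (Sum.inl x)) = μj.rnDeriv μjn := rfl
    rw [h1, Measure.withDensity_rnDeriv_eq _ _ hac]
  have hF : Measurable fun x : Fin T → ℝ ⊕ Unit => ∏ t, g (x t) :=
    Finset.measurable_prod _ fun t _ => hg.comp (measurable_pi_apply t)
  have hpiac : Measure.pi ν = (Measure.pi νn).withDensity (fun x => ∏ t, g (x t)) :=
    stmt19_pi_withDensity νn ν hg key
  have hrn : (Measure.pi ν).rnDeriv (Measure.pi νn)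
      =ᵐ[Measure.pi νn] fun x => ∏ t, g (x t) := by
    rw [hpiac]
    exact Measure.rnDeriv_withDensity _ hF
  have hacpi : Measure.pi ν ≪ Measure.pi νn := by
    rw [hpiac]
    exact withDensity_absolutelyContinuous _ _
  -- per-coordinate a.e. positivity and finiteness of the density
  have hpos : ∀ t, ∀ᵐ y ∂ν t, 0 < g y ∧ g y < ∞ := by
    intro t
    have hac' : ν t ≪ νn t := by
      rw [← key t]
      exact withDensity_absolutelyContinuous _ _
    have h1 : ∀ᵐ y ∂ν t, g y ≠ 0 := by
      rw [ae_iff]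
      have hset : {y : ℝ ⊕ Unit | ¬g y ≠ 0} = g ⁻¹' {0} := by ext y; simp
      rw [hset, ← key t, withDensity_apply _ (hg (measurableSet_singleton 0)),
        setLIntegral_congr_fun (hg (measurableSet_singleton 0))
          (fun y (hy : y ∈ g ⁻¹' {0}) => (hy : g y = 0))]
      simp
    have h2 : ∀ᵐ y ∂νn t, g y < ∞ := by
      refine ae_lt_top hg ?_
      have : ∫⁻ y, g y ∂νn t = ν t Set.univ := by
        rw [← key t, withDensity_apply _ MeasurableSet.univ, Measure.restrict_univ]
      rw [this, measure_univ]
      exact ENNReal.one_ne_top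
    filter_upwards [h1, h2.filter_mono hac'.ae_le] with y hy1 hy2
    exact ⟨pos_iff_ne_zero.mpr hy1, hy2⟩
  have hpospi : ∀ᵐ x ∂Measure.pi ν, ∀ t, 0 < g (x t) ∧ g (x t) < ∞ := by
    rw [ae_all_iff]
    intro t
    exact Measure.tendsto_eval_ae_ae.eventually (hpos t)
  -- the llr of the products decomposes as a sum a.e.
  have hllr : ∀ᵐ x ∂Measure.pi ν, llr (Measure.pi ν) (Measure.pi νn) x
      = ∑ t, Real.log ((g (x t)).toReal) := by
    filter_upwards [hacpi.ae_le hrn, hpospi] with x hx hxp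
    rw [llr, hx, ENNReal.toReal_prod, Real.log_prod]
    exact fun t _ => ENNReal.toReal_ne_zero.mpr ⟨(hxp t).1.ne', (hxp t).2.ne⟩
  set G : ℝ ⊕ Unit → ℝ := fun y => Real.log ((g y).toReal) with hGdef
  have hGm : Measurable G := hg.ennreal_toReal.log
  -- pushforward of the product measure along evaluation
  have hmap : ∀ t, (Measure.pi ν).map (Function.eval t) = ν t := by
    intro t
    ext s hs
    rw [Measure.map_apply (measurable_pi_apply t) hs, Set.eval_preimage, Measure.pi_pi,
      Finset.prod_eq_single t (fun i _ hi => by simp [Function.update_of_ne hi])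
        (fun h => absurd (Finset.mem_univ t) h)]
    simp
  -- integrability of G against each ν t
  have hGpart1 : ∀ t, Integrable G
      (ENNReal.ofReal (r t) • μj.map Sum.inl) := by
    intro t
    refine Integrable.smul_measure ?_ ENNReal.ofReal_ne_top
    rw [stmt19_measurableEmbedding_inl.integrable_map_iff]
    exact hint
  have hGpart2 : ∀ t, Integrable G
      ((1 - ENNReal.ofReal (r t)) • Measure.dirac (Sum.inr () : ℝ ⊕ Unit)) := by
    intro t
    refine Integrable.smul_measure ?_
      (ne_top_of_le_ne_top ENNReal.one_ne_top tsub_le_self)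
    refine ⟨hGm.aestronglyMeasurable, ?_⟩
    show (∫⁻ y, (‖G y‖₊ : ℝ≥0∞) ∂Measure.dirac (Sum.inr () : ℝ ⊕ Unit)) < ∞
    rw [lintegral_dirac' _ hGm.nnnorm.coe_nnreal_ennreal]
    exact ENNReal.coe_lt_top
  have hGint : ∀ t, Integrable G (ν t) := by
    intro t
    rw [hν t]
    exact (hGpart1 t).add_measure (hGpart2 t)
  have hGcomp : ∀ t, Integrable (fun x : Fin T → ℝ ⊕ Unit => G (x t)) (Measure.pi ν) := by
    intro t
    have h := hGint t
    rw [← hmap t] at h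
    exact (integrable_map_measure hGm.aestronglyMeasurable
      (measurable_pi_apply t).aemeasurable).mp h
  -- per-round integral value
  have hround : ∀ t, ∫ y, G y ∂ν t = r t * c := by
    intro t
    rw [hν t, integral_add_measure (hGpart1 t) (hGpart2 t), integral_smul_measure,
      integral_smul_measure,
      integral_map measurable_inl.aemeasurable hGm.aestronglyMeasurable,
      integral_dirac' _ _ hGm.stronglyMeasurable]
    have hGinr : G (Sum.inr ()) = 0 := by simp [hGdef, hgdef]
    have hGinl : (fun x : ℝ => G (Sum.inl x)) = llr μj μjn := rfl
    rw [hGinr, hGinl, ENNReal.toReal_ofReal (hr0 t)]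
    simp [hc]
  calc ∫ h, llr (Measure.pi ν) (Measure.pi νn) h ∂Measure.pi ν
      = ∫ x, ∑ t, G (x t) ∂Measure.pi ν := integral_congr_ae hllr
    _ = ∑ t, ∫ x, G (x t) ∂Measure.pi ν :=
        integral_finset_sum _ fun t _ => hGcomp t
    _ = ∑ t, ∫ y, G y ∂ν t := by
        refine Finset.sum_congr rfl fun t _ => ?_
        rw [← hmap t,
          integral_map (measurable_pi_apply t).aemeasurable hGm.aestronglyMeasurable]
    _ = ∑ t, r t * c := Finset.sum_congr rfl fun t _ => hround t
    _ = ∑ i : Fin K, ∑ t ∈ Finset.univ.filter (fun t => a t = i), r t * c :=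
        (Finset.sum_fiberwise_of_maps_to (fun t _ => Finset.mem_univ (a t)) _).symm
    _ = ∑ i : Fin K, (if E i j then p i j else 0) *
          ((Finset.univ.filter fun t => a t = i).card : ℝ) * c := by
        refine Finset.sum_congr rfl fun i _ => ?_
        have hterm : ∀ t ∈ Finset.univ.filter (fun t => a t = i),
            r t * c = (if E i j then p i j else 0) * c := by
          intro t ht
          rw [hr]
          simp only
          rw [(Finset.mem_filter.mp ht).2]
        rw [Finset.sum_congr rfl hterm, Finset.sum_const, nsmul_eq_mul]
        ring
    _ = ∑ i ∈ Finset.univ.filter (fun i => E i j),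
          p i j * ((Finset.univ.filter fun t => a t = i).card : ℝ) * c := by
        rw [Finset.sum_filter]
        exact Finset.sum_congr rfl fun i _ => by by_cases h : E i j <;> simp [h]
end
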